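/- Let n ≥ 2 and let X ⊆ ℝⁿ be a singleton (a polytope with exactly 1 vertex). Then there exists a finite set D ⊆ ℝⁿ of directions with |D| ≤ 2n - 1 such that D determines X within the class of all polytopes in ℝⁿ having at most 3 extreme points. (Convergence of Algorithm 3 in the case n_v = 1 with known bound n̄ = 3: it terminates after at most 2n - 1 oracle calls with X_v = S_v.) -/

import Mathlib

open RealInnerProductSpace

/-- Support function of a subset of `ℝⁿ`. -/
noncomputable def supp {n : ℕ} (X : Set (EuclideanSpace ℝ (Fin n)))
    (d : EuclideanSpace ℝ (Fin n)) : ℝ :=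
  sSup ((fun v => ⟪v, d⟫) '' X)

/-- `X` is a polytope: the convex hull of a nonempty finite set. -/
def IsPolytope {n : ℕ} (X : Set (EuclideanSpace ℝ (Fin n))) : Prop :=
  ∃ F : Finset (EuclideanSpace ℝ (Fin n)), F.Nonempty ∧ X = convexHull ℝ (F : Set _)

/-- The finite direction set `D` determines `X` within the class `𝒞`. -/
def Determines {n : ℕ} (𝒞 : Set (Set (EuclideanSpace ℝ (Fin n))))
    (D : Finset (EuclideanSpace ℝ (Fin n))) (X : Set (EuclideanSpace ℝ (Fin n))) : Prop :=
  ∀ Y ∈ 𝒞, (∀ d ∈ D, supp Y d = supp X d) → Y = X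

/-!
A point `x` is pinned down by the `n + 1` directions `e₁, …, eₙ, -(e₁ + ⋯ + eₙ)`, which
positively span `ℝⁿ`: if every point `y` of `Y` satisfies `⟪y, d⟫ ≤ h_{x}(d) = ⟪x, d⟫` for these
`d`, then `yᵢ ≤ xᵢ` for all `i` while `∑ yᵢ ≥ ∑ xᵢ`, so `y = x`. For a polytope `Y` the
support values bound every point of `Y`, and `Y` is nonempty, hence `Y = {x}`. Since `n ≥ 2`,
`n + 1 ≤ 2n - 1`.
-/

section SimplexDirections

variable (ι : Type*) [Fintype ι] [DecidableEq ι]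

noncomputable def simplexDirections : Finset (EuclideanSpace ℝ ι) :=
  insert (-∑ i, EuclideanSpace.single i 1) (Finset.univ.image fun i => EuclideanSpace.single i 1)

theorem card_simplexDirections_le : (simplexDirections ι).card ≤ Fintype.card ι + 1 :=
  (Finset.card_insert_le _ _).trans (Nat.add_le_add_right Finset.card_image_le 1)

variable {ι}

theorem eq_of_forall_inner_le_simplexDirections {x y : EuclideanSpace ℝ ι}
    (h : ∀ d ∈ simplexDirections ι, ⟪y, d⟫ ≤ ⟪x, d⟫) : y = x := by
  have hcoord : ∀ i ∈ Finset.univ, y i ≤ x i := fun i _ => by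
    simpa [EuclideanSpace.inner_single_right] using
      h _ (Finset.mem_insert_of_mem (Finset.mem_image_of_mem _ (Finset.mem_univ i)))
  have hsum : ∑ i, x i ≤ ∑ i, y i := by
    simpa [inner_sum, EuclideanSpace.inner_single_right] using
      h _ (Finset.mem_insert_self _ _)
  ext i
  exact (Finset.sum_eq_sum_iff_of_le hcoord).mp (le_antisymm (Finset.sum_le_sum hcoord) hsum)
    i (Finset.mem_univ i)

end SimplexDirections

section SupportFunction

variable {n : ℕ}

theorem supp_singleton (x d : EuclideanSpace ℝ (Fin n)) : supp {x} d = ⟪x, d⟫ := by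
  simp [supp]

theorem inner_le_supp {Y : Set (EuclideanSpace ℝ (Fin n))} (hY : IsCompact Y)
    {y : EuclideanSpace ℝ (Fin n)} (hy : y ∈ Y) (d : EuclideanSpace ℝ (Fin n)) :
    ⟪y, d⟫ ≤ supp Y d :=
  le_csSup (hY.image (continuous_id.inner continuous_const)).bddAbove ⟨y, hy, rfl⟩

theorem IsPolytope.isCompact {X : Set (EuclideanSpace ℝ (Fin n))} (hX : IsPolytope X) :
    IsCompact X := by
  obtain ⟨F, -, rfl⟩ := hX
  exact F.finite_toSet.isCompact_convexHull (𝕜 := ℝ)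

theorem IsPolytope.nonempty {X : Set (EuclideanSpace ℝ (Fin n))} (hX : IsPolytope X) :
    X.Nonempty := by
  obtain ⟨F, hF, rfl⟩ := hX
  exact hF.to_set.convexHull

theorem determines_singleton {𝒞 : Set (Set (EuclideanSpace ℝ (Fin n)))}
    {D : Finset (EuclideanSpace ℝ (Fin n))} {x : EuclideanSpace ℝ (Fin n)}
    (h𝒞 : ∀ Y ∈ 𝒞, IsCompact Y ∧ Y.Nonempty)
    (hD : ∀ y, (∀ d ∈ D, ⟪y, d⟫ ≤ ⟪x, d⟫) → y = x) :
    Determines 𝒞 D {x} := by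
  intro Y hY hsupp
  obtain ⟨hcompact, hne⟩ := h𝒞 Y hY
  refine Set.eq_singleton_iff_nonempty_unique_mem.mpr ⟨hne, fun y hy => hD y fun d hd => ?_⟩
  simpa only [hsupp d hd, supp_singleton] using inner_le_supp hcompact hy d

end SupportFunction

/-- a singleton `X ⊆ ℝⁿ` (`n ≥ 2`) is determined by at most `2n - 1`
directions within the class of polytopes in `ℝⁿ` with at most `3` extreme points. -/
theorem stmt_11 (n : ℕ) (hn : 2 ≤ n) (X : Set (EuclideanSpace ℝ (Fin n)))
    (x : EuclideanSpace ℝ (Fin n)) (hX : X = {x}) :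
    ∃ D : Finset (EuclideanSpace ℝ (Fin n)), D.card ≤ 2 * n - 1 ∧
      Determines {Y | IsPolytope Y ∧ (Set.extremePoints ℝ Y).ncard ≤ 3} D X := by
  subst hX
  refine ⟨simplexDirections (Fin n), ?_, determines_singleton ?_
    fun _ => eq_of_forall_inner_le_simplexDirections⟩
  · have := card_simplexDirections_le (Fin n)
    rw [Fintype.card_fin] at this
    omega
  · rintro Y ⟨hY, -⟩
    exact ⟨hY.isCompact, hY.nonempty⟩
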